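/- Let $\Lambda$ be a nonempty finite set and for each $\lambda \in \Lambda$ let $A_n(\lambda), a_n(\lambda), B_n(\lambda)$ be real sequences with $B_n(\lambda) \geq \kappa > 0$ for all $n \geq N$ and all $\lambda$. Suppose $\sup_{\lambda} |a_n(\lambda)/B_n(\lambda)| \to 0$ and $\sup_{\lambda} |(A_n(\lambda)-B_n(\lambda))/B_n(\lambda)| \to 0$ as $n \to \infty$. If $\hat{\lambda}_n \in \operatorname{argmin}_{\lambda \in \Lambda} (A_n(\lambda) + a_n(\lambda))$, then $A_n(\hat{\lambda}_n) / \inf_{\lambda \in \Lambda} A_n(\lambda) \to 1$. -/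

import Mathlib

/-!
Let `δₙ` and `εₙ` be the two suprema. Once `δₙ < 1`, the relative bounds give
`(1 - δₙ) Bₙ ≤ Aₙ`, so the perturbation is small relative to `Aₙ` itself:
`|aₙ| ≤ ηₙ Aₙ` with `ηₙ = εₙ / (1 - δₙ) → 0`. For a minimizer `λ̂` of `A + a` this yields
`(1 - η) A(λ̂) ≤ A(λ̂) + a(λ̂) ≤ A(λ) + a(λ) ≤ (1 + η) A(λ)` for every `λ`, so the ratio
`A(λ̂) / min A` is squeezed between `1` and `(1 + ηₙ) / (1 - ηₙ) → 1`.
-/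

open Filter Topology

lemma abs_le_iSup_abs_div_mul {Λ : Type*} [Finite Λ] (f B : Λ → ℝ) {l : Λ} (hB : 0 < B l) :
    |f l| ≤ (⨆ i, |f i / B i|) * B l := by
  have h := le_ciSup (Set.finite_range fun i => |f i / B i|).bddAbove l
  rwa [abs_div, abs_of_pos hB, div_le_iff₀ hB] at h

lemma sub_mul_le_of_abs_sub_le {A B δ : ℝ} (h : |A - B| ≤ δ * B) : (1 - δ) * B ≤ A := by
  linarith [(abs_le.1 h).1]

lemma abs_le_div_mul_of_abs_sub_le {A B a δ ε : ℝ} (hB : 0 < B) (hδ : δ < 1)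
    (hAB : |A - B| ≤ δ * B) (ha : |a| ≤ ε * B) : |a| ≤ ε / (1 - δ) * A := by
  have hε : 0 ≤ ε := nonneg_of_mul_nonneg_left ((abs_nonneg a).trans ha) hB
  calc |a| ≤ ε * B := ha
    _ = ε / (1 - δ) * ((1 - δ) * B) := by field_simp [(sub_pos.2 hδ).ne']
    _ ≤ ε / (1 - δ) * A :=
      mul_le_mul_of_nonneg_left (sub_mul_le_of_abs_sub_le hAB) (div_nonneg hε (sub_pos.2 hδ).le)

lemma one_sub_mul_le_one_add_mul_of_perturbed_min {Λ : Type*} {A a : Λ → ℝ} {η : ℝ}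
    (ha : ∀ l, |a l| ≤ η * A l) {lhat : Λ} (hmin : ∀ l, A lhat + a lhat ≤ A l + a l) (l : Λ) :
    (1 - η) * A lhat ≤ (1 + η) * A l := by
  linarith [neg_abs_le (a lhat), le_abs_self (a l), ha lhat, ha l, hmin l]

lemma div_iInf_mem_Icc_of_perturbed_min {Λ : Type*} [Finite Λ] [Nonempty Λ] {A a : Λ → ℝ}
    {η : ℝ} (hη : η < 1) (hA : ∀ l, 0 < A l) (ha : ∀ l, |a l| ≤ η * A l) {lhat : Λ}
    (hmin : ∀ l, A lhat + a lhat ≤ A l + a l) :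
    A lhat / ⨅ l, A l ∈ Set.Icc 1 ((1 + η) / (1 - η)) := by
  obtain ⟨l₀, hl₀⟩ := exists_eq_ciInf_of_finite (f := A)
  rw [← hl₀]
  constructor
  · exact (one_le_div (hA l₀)).2 (hl₀ ▸ ciInf_le (Set.finite_range A).bddBelow lhat)
  · rw [div_le_div_iff₀ (hA l₀) (sub_pos.2 hη), mul_comm]
    exact one_sub_mul_le_one_add_mul_of_perturbed_min ha hmin l₀

theorem stmt_0 {Λ : Type*} [Finite Λ] [Nonempty Λ]
    (A a B : ℕ → Λ → ℝ) (κ : ℝ) (hκ : 0 < κ) (N : ℕ)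
    (hB : ∀ n ≥ N, ∀ l : Λ, κ ≤ B n l)
    (ha : Tendsto (fun n => ⨆ l : Λ, |a n l / B n l|) atTop (nhds 0))
    (hAB : Tendsto (fun n => ⨆ l : Λ, |(A n l - B n l) / B n l|) atTop (nhds 0))
    (lhat : ℕ → Λ)
    (hmin : ∀ n, ∀ l : Λ, A n (lhat n) + a n (lhat n) ≤ A n l + a n l) :
    Tendsto (fun n => A n (lhat n) / ⨅ l : Λ, A n l) atTop (nhds 1) := by
  set ε := fun n => ⨆ l : Λ, |a n l / B n l|
  set δ := fun n => ⨆ l : Λ, |(A n l - B n l) / B n l|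
  set η := fun n => ε n / (1 - δ n)
  have hη : Tendsto η atTop (𝓝 0) := by
    have h := ha.div (tendsto_const_nhds (x := (1 : ℝ)) |>.sub hAB) (by norm_num)
    rwa [sub_zero, zero_div] at h
  have hbound : Tendsto (fun n => (1 + η n) / (1 - η n)) atTop (𝓝 1) := by
    have h := (tendsto_const_nhds (x := (1 : ℝ)) |>.add hη).div
      (tendsto_const_nhds (x := (1 : ℝ)) |>.sub hη) (by norm_num)
    rwa [add_zero, sub_zero, div_one] at h
  have hmem : ∀ᶠ n in atTop,
      A n (lhat n) / ⨅ l, A n l ∈ Set.Icc 1 ((1 + η n) / (1 - η n)) := by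
    filter_upwards [eventually_ge_atTop N, hAB.eventually (gt_mem_nhds one_pos),
      hη.eventually (gt_mem_nhds one_pos)] with n hn hδ hηn
    have hBpos : ∀ l, 0 < B n l := fun l => hκ.trans_le (hB n hn l)
    have hABn : ∀ l, |A n l - B n l| ≤ δ n * B n l :=
      fun l => abs_le_iSup_abs_div_mul (fun l => A n l - B n l) (B n) (hBpos l)
    refine div_iInf_mem_Icc_of_perturbed_min hηn (fun l => ?_)
      (fun l => abs_le_div_mul_of_abs_sub_le (hBpos l) hδ (hABn l)
        (abs_le_iSup_abs_div_mul _ _ (hBpos l))) (hmin n)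
    exact mul_pos (sub_pos.2 hδ) (hBpos l) |>.trans_le (sub_mul_le_of_abs_sub_le (hABn l))
  exact tendsto_of_tendsto_of_tendsto_of_le_of_le' tendsto_const_nhds hbound
    (hmem.mono fun _ h => h.1) (hmem.mono fun _ h => h.2)
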